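/- For every q ≥ 1 and 1 ≤ k < r, there exists a connected r-uniform hypergraph I with ι(I, K_k^r) = q and γ(I) = q + k − 1, so the lower bound γ(H) − k + 1 ≤ ι(H, K_k^r) is tight. -/

import Mathlib

open scoped Classical

noncomputable section

/-- A (finite) hypergraph: a finite vertex set together with a finite
set of edges, each edge being a subset of the vertex set. -/
structure FinHypergraph (V : Type*) where
  verts : Finset V
  edges : Finset (Finset V)
  edge_sub : ∀ e ∈ edges, e ⊆ verts

namespace FinHypergraph

variable {V : Type*} [DecidableEq V]

/-- `H` is `r`-uniform if every edge has exactly `r` vertices. -/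
def IsUniform (H : FinHypergraph V) (r : ℕ) : Prop :=
  ∀ e ∈ H.edges, e.card = r

/-- The closed neighbourhood `N_H[D]` of a set `D` of vertices. -/
def closedNbhd (H : FinHypergraph V) (D : Finset V) : Finset V :=
  D ∪ H.verts.filter (fun w => ∃ e ∈ H.edges, w ∈ e ∧ ∃ v ∈ D, v ∈ e)

/-- The `s`-th shadow hypergraph `H^(s)`: same vertices, edges are all
`s`-element subsets of edges of `H`. -/
def shadow (H : FinHypergraph V) (s : ℕ) : FinHypergraph V where
  verts := H.verts
  edges := H.edges.biUnion (fun e => e.powersetCard s)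
  edge_sub := by
    intro a ha
    rw [Finset.mem_biUnion] at ha
    obtain ⟨e, he, hae⟩ := ha
    exact (Finset.mem_powersetCard.mp hae).1.trans (H.edge_sub e he)

/-- The subhypergraph of `H` induced by a vertex set `X`. -/
def induce (H : FinHypergraph V) (X : Finset V) : FinHypergraph V where
  verts := X
  edges := H.edges.filter (fun e => e ⊆ X)
  edge_sub := fun _ he => (Finset.mem_filter.mp he).2

/-- `H` contains a copy of `K_k^r`, the complete `r`-uniform hypergraph on
`k` vertices: a `k`-set of vertices all of whose `r`-subsets are edges. -/
def HasCliqueCopy (H : FinHypergraph V) (k r : ℕ) : Prop :=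
  ∃ S : Finset V, S ⊆ H.verts ∧ S.card = k ∧ ∀ A ∈ S.powersetCard r, A ∈ H.edges

/-- `D` is a `K_k^r`-isolating set of `H`: deleting `N_H[D]` leaves no copy of `K_k^r`. -/
def IsIsolating (H : FinHypergraph V) (k r : ℕ) (D : Finset V) : Prop :=
  D ⊆ H.verts ∧ ¬ (H.induce (H.verts \ H.closedNbhd D)).HasCliqueCopy k r

/-- `ι(H, K_k^r)`: the minimum size of a `K_k^r`-isolating set of `H`. -/
def iso (H : FinHypergraph V) (k r : ℕ) : ℕ :=
  sInf {n | ∃ D : Finset V, H.IsIsolating k r D ∧ D.card = n}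

/-- `D` is a dominating set of `H`. -/
def IsDominating (H : FinHypergraph V) (D : Finset V) : Prop :=
  D ⊆ H.verts ∧ H.verts ⊆ H.closedNbhd D

/-- The domination number `γ(H)`. -/
def domNum (H : FinHypergraph V) : ℕ :=
  sInf {n | ∃ D : Finset V, H.IsDominating D ∧ D.card = n}

/-- Two vertices are related if they lie in a common edge. -/
def edgeRel (H : FinHypergraph V) (v w : V) : Prop :=
  ∃ e ∈ H.edges, v ∈ e ∧ w ∈ e

/-- `H` is connected: any two vertices are joined by a chain of pairwise
intersecting edges (equivalently, by the reflexive-transitive closure of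
sharing an edge). -/
def Connected (H : FinHypergraph V) : Prop :=
  ∀ v ∈ H.verts, ∀ w ∈ H.verts, Relation.ReflTransGen H.edgeRel v w

/-- `H` is a copy of `K_k^r`: it has `k` vertices and its edges are exactly
all `r`-subsets of its vertex set. -/
def IsCompleteCopy (H : FinHypergraph V) (k r : ℕ) : Prop :=
  H.verts.card = k ∧ H.edges = H.verts.powersetCard r

/-- `H` is a copy of the 5-cycle `C₅` (as a 2-uniform hypergraph). -/
def IsC5Copy (H : FinHypergraph V) : Prop :=
  ∃ f : Fin 5 → V, Function.Injective f ∧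
    H.verts = Finset.univ.image f ∧
    H.edges = Finset.univ.image (fun i : Fin 5 => ({f i, f (i + 1)} : Finset V))

end FinHypergraph

open FinHypergraph

/-!
Take `q` disjoint edges (blocks) with one leader each, chain consecutive leaders by connector
edges through `r - 2` fresh vertices, and hang `k - 1` pendants `{leader} ∪ R_i`, `R_i ∪ {s_i}`
off the first leader. The leaders dominate everything but the `k - 1` tips `s_i`; since `k < r`,
a copy of `K_k^r` is just a set of `k` vertices, so the leaders isolate `K_k^r`. Adding one vertex of
each `R_i` dominates. Conversely, the `r - 1 ≥ k` non-leaders of a block lie on no other edge,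
so every isolating set meets every block, and a dominating set must also meet each edge
`R_i ∪ {s_i}`, the only edge through `s_i`.
-/

lemma Finset.card_le_card_of_forall_inter_nonempty {ι α : Type*} [DecidableEq α]
    {s : Finset ι} {f : ι → Finset α} {D : Finset α} (hf : (s : Set ι).PairwiseDisjoint f)
    (hD : ∀ i ∈ s, (D ∩ f i).Nonempty) : s.card ≤ D.card :=
  (Finset.card_le_card_biUnion (hf.mono fun _ => Finset.inter_subset_right) hD).trans
    (Finset.card_le_card (Finset.biUnion_subset.2 fun _ _ => Finset.inter_subset_left))

lemma Finset.setOf_card_eq_of_forall_map_iff {α β : Type*} (f : α ↪ β) {s : Finset α}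
    {P : Finset β → Prop} {Q : Finset α → Prop} (hP : ∀ D', P D' → D' ⊆ s.map f)
    (hPQ : ∀ D, P (D.map f) ↔ Q D) :
    {n | ∃ D', P D' ∧ D'.card = n} = {n | ∃ D, Q D ∧ D.card = n} := by
  ext n
  constructor
  · rintro ⟨D', hD', rfl⟩
    obtain ⟨D, -, rfl⟩ := Finset.subset_map_iff.1 (hP D' hD')
    exact ⟨D, (hPQ D).1 hD', (Finset.card_map f).symm⟩
  · rintro ⟨D, hD, rfl⟩
    exact ⟨D.map f, (hPQ D).2 hD, Finset.card_map f⟩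

namespace FinHypergraph

variable {V W : Type*} {H : FinHypergraph V}

lemma mem_closedNbhd [DecidableEq V] {D : Finset V} {v : V} :
    v ∈ H.closedNbhd D ↔ v ∈ D ∨ v ∈ H.verts ∧ ∃ e ∈ H.edges, v ∈ e ∧ ∃ u ∈ D, u ∈ e := by
  simp [closedNbhd]

lemma mem_closedNbhd_of_mem_edge [DecidableEq V] {D e : Finset V} {u v : V} (he : e ∈ H.edges)
    (hv : v ∈ e) (hu : u ∈ e) (huD : u ∈ D) : v ∈ H.closedNbhd D :=
  mem_closedNbhd.2 (.inr ⟨H.edge_sub e he hv, e, he, hv, u, huD, hu⟩)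

lemma closedNbhd_mono [DecidableEq V] {D D' : Finset V} (h : D ⊆ D') :
    H.closedNbhd D ⊆ H.closedNbhd D' := by
  intro v hv
  rcases mem_closedNbhd.1 hv with hv | ⟨hv, e, he, hve, u, hu, hue⟩
  · exact mem_closedNbhd.2 (.inl (h hv))
  · exact mem_closedNbhd.2 (.inr ⟨hv, e, he, hve, u, h hu, hue⟩)

lemma inter_nonempty_of_mem_closedNbhd [DecidableEq V] {D S : Finset V} {v : V} (hvS : v ∈ S)
    (hS : ∀ e ∈ H.edges, v ∈ e → e ⊆ S) (hv : v ∈ H.closedNbhd D) : (D ∩ S).Nonempty := by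
  rcases mem_closedNbhd.1 hv with hvD | ⟨-, e, he, hve, u, huD, hue⟩
  · exact ⟨v, Finset.mem_inter.2 ⟨hvD, hvS⟩⟩
  · exact ⟨u, Finset.mem_inter.2 ⟨huD, hS e he hve hue⟩⟩

lemma hasCliqueCopy_iff_le_card {k r : ℕ} (hkr : k < r) :
    H.HasCliqueCopy k r ↔ k ≤ H.verts.card := by
  refine ⟨fun ⟨S, hS, hSk, _⟩ => hSk ▸ Finset.card_le_card hS, fun h => ?_⟩
  obtain ⟨S, hS, hSk⟩ := Finset.exists_subset_card_eq h
  refine ⟨S, hS, hSk, fun A hA => absurd (Finset.card_le_card (Finset.mem_powersetCard.1 hA).1) ?_⟩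
  rw [(Finset.mem_powersetCard.1 hA).2, hSk]
  omega

lemma isIsolating_iff_card_lt [DecidableEq V] {k r : ℕ} {D : Finset V} (hkr : k < r) :
    H.IsIsolating k r D ↔ D ⊆ H.verts ∧ (H.verts \ H.closedNbhd D).card < k := by
  rw [IsIsolating, hasCliqueCopy_iff_le_card hkr, not_le]
  rfl

lemma inter_nonempty_of_isIsolating [DecidableEq V] {k r : ℕ} {D P S : Finset V} (hkr : k < r)
    (hD : H.IsIsolating k r D) (hP : P ⊆ H.verts) (hPk : k ≤ P.card) (hPS : P ⊆ S)
    (hS : ∀ v ∈ P, ∀ e ∈ H.edges, v ∈ e → e ⊆ S) : (D ∩ S).Nonempty := by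
  by_contra hDS
  have hP_out : P ⊆ H.verts \ H.closedNbhd D := fun v hv =>
    Finset.mem_sdiff.2 ⟨hP hv, fun hvN =>
      hDS (inter_nonempty_of_mem_closedNbhd (hPS hv) (hS v hv) hvN)⟩
  have := Finset.card_le_card hP_out
  have := ((isIsolating_iff_card_lt hkr).1 hD).2
  omega

lemma connected_of_forall_edge {root : V} (hV : ∀ v ∈ H.verts, ∃ e ∈ H.edges, v ∈ e)
    (hE : ∀ e ∈ H.edges, ∃ u ∈ e, Relation.ReflTransGen H.edgeRel u root) : H.Connected := by
  have hroot : ∀ v ∈ H.verts, Relation.ReflTransGen H.edgeRel v root := fun v hv => by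
    obtain ⟨e, he, hve⟩ := hV v hv
    obtain ⟨u, hue, hu⟩ := hE e he
    exact .head ⟨e, he, hve, hue⟩ hu
  intro v hv w hw
  have hsymm : Function.swap H.edgeRel ≤ H.edgeRel := fun _ _ ⟨e, he, hx, hy⟩ => ⟨e, he, hy, hx⟩
  exact (hroot v hv).trans (Relation.ReflTransGen.mono hsymm _ _ (.swap _ _ (hroot w hw)))

def map (f : V ↪ W) (H : FinHypergraph V) : FinHypergraph W where
  verts := H.verts.map f
  edges := H.edges.map (Finset.mapEmbedding f).toEmbedding
  edge_sub := by
    simp only [Finset.mem_map, RelEmbedding.coe_toEmbedding, Finset.mapEmbedding_apply]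
    rintro _ ⟨e, he, rfl⟩
    exact Finset.map_subset_map.2 (H.edge_sub e he)

section map

variable (f : V ↪ W)

@[simp]
lemma map_verts : (H.map f).verts = H.verts.map f := rfl

lemma mem_map_edges {e' : Finset W} : e' ∈ (H.map f).edges ↔ ∃ e ∈ H.edges, e.map f = e' := by
  simp [map]

lemma IsUniform.map {r : ℕ} (hH : H.IsUniform r) : (H.map f).IsUniform r := by
  intro e' he'
  obtain ⟨e, he, rfl⟩ := (mem_map_edges f).1 he'
  rw [Finset.card_map, hH e he]

lemma edgeRel_map {v w : V} : (H.map f).edgeRel (f v) (f w) ↔ H.edgeRel v w := by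
  simp [edgeRel, mem_map_edges]

lemma Connected.map (hH : H.Connected) : (H.map f).Connected := by
  simp only [Connected, map_verts, Finset.mem_map]
  rintro _ ⟨v, hv, rfl⟩ _ ⟨w, hw, rfl⟩
  exact Relation.ReflTransGen.lift f (fun _ _ => (edgeRel_map f).2) _ _ (hH v hv w hw)

variable [DecidableEq V] [DecidableEq W]

lemma closedNbhd_map (D : Finset V) :
    (H.map f).closedNbhd (D.map f) = (H.closedNbhd D).map f := by
  ext w
  constructor
  · intro hw
    rcases mem_closedNbhd.1 hw with hwD | ⟨-, e', he', hwe, u', huD, hue⟩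
    · obtain ⟨v, hvD, rfl⟩ := Finset.mem_map.1 hwD
      exact Finset.mem_map_of_mem f (mem_closedNbhd.2 (.inl hvD))
    · obtain ⟨e, he, rfl⟩ := (mem_map_edges f).1 he'
      obtain ⟨v, hve, rfl⟩ := Finset.mem_map.1 hwe
      obtain ⟨u, hu, rfl⟩ := Finset.mem_map.1 huD
      exact Finset.mem_map_of_mem f
        (mem_closedNbhd_of_mem_edge he hve ((Finset.mem_map' f).1 hue) hu)
  · intro hw
    obtain ⟨v, hv, rfl⟩ := Finset.mem_map.1 hw
    rcases mem_closedNbhd.1 hv with hvD | ⟨-, e, he, hve, u, huD, hue⟩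
    · exact mem_closedNbhd.2 (.inl (Finset.mem_map_of_mem f hvD))
    · exact mem_closedNbhd_of_mem_edge ((mem_map_edges f).2 ⟨e, he, rfl⟩)
        (Finset.mem_map_of_mem f hve) (Finset.mem_map_of_mem f hue) (Finset.mem_map_of_mem f huD)

lemma iso_map {k r : ℕ} (hkr : k < r) : (H.map f).iso k r = H.iso k r := by
  refine congrArg sInf (Finset.setOf_card_eq_of_forall_map_iff f (fun D' hD' => hD'.1) fun D => ?_)
  rw [isIsolating_iff_card_lt hkr, isIsolating_iff_card_lt hkr, map_verts, closedNbhd_map,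
    Finset.map_subset_map, ← Finset.map_sdiff, Finset.card_map]

lemma domNum_map : (H.map f).domNum = H.domNum := by
  refine congrArg sInf (Finset.setOf_card_eq_of_forall_map_iff f (fun D' hD' => hD'.1) fun D => ?_)
  rw [IsDominating, IsDominating, map_verts, closedNbhd_map, Finset.map_subset_map,
    Finset.map_subset_map]

end map

end FinHypergraph

/-- `block j t` is vertex `t` of block `j`, whose leader is `block j 0`; `middle j t` are the
`r - 2` fresh vertices of the connector from leader `j` to leader `j + 1`; `pendant i t` is a
vertex of `R_i` for `t < r - 1` and is the tip `s_i` for `t = r - 1`. -/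
inductive ChainVertex
  | block (j t : ℕ)
  | middle (j t : ℕ)
  | pendant (i t : ℕ)

namespace ChainVertex

def toNat : ChainVertex → ℕ
  | block j t => Nat.pair 0 (Nat.pair j t)
  | middle j t => Nat.pair 1 (Nat.pair j t)
  | pendant i t => Nat.pair 2 (Nat.pair i t)

lemma toNat_injective : Function.Injective toNat := by
  rintro (⟨j, t⟩ | ⟨j, t⟩ | ⟨j, t⟩) (⟨j', t'⟩ | ⟨j', t'⟩ | ⟨j', t'⟩) h <;>
    simp_all [toNat, Nat.pair_eq_pair]

def embeddingNat : ChainVertex ↪ ℕ := ⟨toNat, toNat_injective⟩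

end ChainVertex

namespace ChainWithPendants

open ChainVertex Finset

def blockEdge (r j : ℕ) : Finset ChainVertex := (range r).image (block j)

def connectorEdge (r j : ℕ) : Finset ChainVertex :=
  insert (block j 0) (insert (block (j + 1) 0) ((range (r - 2)).image (middle j)))

def pendantBase (r i : ℕ) : Finset ChainVertex :=
  insert (block 0 0) ((range (r - 1)).image (pendant i))

def pendantTip (r i : ℕ) : Finset ChainVertex := (range r).image (pendant i)

def edgeSet (q r k : ℕ) : Finset (Finset ChainVertex) :=
  (range q).image (blockEdge r) ∪ (range (q - 1)).image (connectorEdge r) ∪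
    (range (k - 1)).image (pendantBase r) ∪ (range (k - 1)).image (pendantTip r)

def hypergraph (q r k : ℕ) : FinHypergraph ChainVertex where
  verts := (edgeSet q r k).sup id
  edges := edgeSet q r k
  edge_sub _ he := le_sup (f := id) he

def leaders (q : ℕ) : Finset ChainVertex := (range q).image (block · 0)

def tips (r k : ℕ) : Finset ChainVertex := (range (k - 1)).image (pendant · (r - 1))

def dominators (q k : ℕ) : Finset ChainVertex :=
  leaders q ∪ (range (k - 1)).image (pendant · 0)

variable {q r k : ℕ}

@[simp]
lemma block_mem_blockEdge {j t : ℕ} : block j t ∈ blockEdge r j ↔ t < r := by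
  simp [blockEdge]

@[simp]
lemma pendant_mem_pendantBase {i t : ℕ} : pendant i t ∈ pendantBase r i ↔ t < r - 1 := by
  simp [pendantBase]

@[simp]
lemma pendant_mem_pendantTip {i t : ℕ} : pendant i t ∈ pendantTip r i ↔ t < r := by
  simp [pendantTip]

lemma mem_edgeSet {e : Finset ChainVertex} : e ∈ edgeSet q r k ↔
    (∃ j < q, blockEdge r j = e) ∨ (∃ j < q - 1, connectorEdge r j = e) ∨
      (∃ i < k - 1, pendantBase r i = e) ∨ (∃ i < k - 1, pendantTip r i = e) := by
  simp [edgeSet]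

lemma connectorEdge_mem_edgeSet {j : ℕ} (hj : j < q - 1) : connectorEdge r j ∈ edgeSet q r k :=
  mem_edgeSet.2 (.inr (.inl ⟨j, hj, rfl⟩))

lemma pendantBase_mem_edgeSet {i : ℕ} (hi : i < k - 1) : pendantBase r i ∈ edgeSet q r k :=
  mem_edgeSet.2 (.inr (.inr (.inl ⟨i, hi, rfl⟩)))

lemma pendantTip_mem_edgeSet {i : ℕ} (hi : i < k - 1) : pendantTip r i ∈ edgeSet q r k :=
  mem_edgeSet.2 (.inr (.inr (.inr ⟨i, hi, rfl⟩)))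

lemma mem_verts {v : ChainVertex} :
    v ∈ (hypergraph q r k).verts ↔ ∃ e ∈ edgeSet q r k, v ∈ e := by
  simp [hypergraph]

lemma block_mem_verts {j t : ℕ} (hj : j < q) (ht : t < r) :
    block j t ∈ (hypergraph q r k).verts :=
  mem_verts.2 ⟨blockEdge r j, mem_edgeSet.2 (.inl ⟨j, hj, rfl⟩), block_mem_blockEdge.2 ht⟩

lemma pendant_mem_verts {i t : ℕ} (hi : i < k - 1) (ht : t < r) :
    pendant i t ∈ (hypergraph q r k).verts :=
  mem_verts.2 ⟨_, pendantTip_mem_edgeSet hi, pendant_mem_pendantTip.2 ht⟩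

lemma isUniform_hypergraph (hr : 2 ≤ r) : (hypergraph q r k).IsUniform r := by
  intro e he
  rcases mem_edgeSet.1 he with ⟨j, -, rfl⟩ | ⟨j, -, rfl⟩ | ⟨i, -, rfl⟩ | ⟨i, -, rfl⟩
  · rw [blockEdge, card_image_of_injective _ fun _ _ h => by simpa using h, card_range]
  · rw [connectorEdge, card_insert_of_notMem (by simp), card_insert_of_notMem (by simp),
      card_image_of_injective _ fun _ _ h => by simpa using h, card_range]
    omega
  · rw [pendantBase, card_insert_of_notMem (by simp),
      card_image_of_injective _ fun _ _ h => by simpa using h, card_range]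
    omega
  · rw [pendantTip, card_image_of_injective _ fun _ _ h => by simpa using h, card_range]

lemma reflTransGen_block_zero {j : ℕ} (hj : j < q) :
    Relation.ReflTransGen (hypergraph q r k).edgeRel (block j 0) (block 0 0) := by
  induction j with
  | zero => exact .refl
  | succ j ih =>
    exact .head ⟨connectorEdge r j, connectorEdge_mem_edgeSet (by omega), by simp [connectorEdge],
      by simp [connectorEdge]⟩ (ih (by omega))

lemma connected_hypergraph (hr : 2 ≤ r) : (hypergraph q r k).Connected := by
  refine FinHypergraph.connected_of_forall_edge (root := block 0 0) (fun v => mem_verts.1) ?_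
  intro e he
  rcases mem_edgeSet.1 he with ⟨j, hj, rfl⟩ | ⟨j, hj, rfl⟩ | ⟨i, hi, rfl⟩ | ⟨i, hi, rfl⟩
  · exact ⟨block j 0, block_mem_blockEdge.2 (by omega), reflTransGen_block_zero hj⟩
  · exact ⟨block j 0, by simp [connectorEdge], reflTransGen_block_zero (by omega)⟩
  · exact ⟨block 0 0, by simp [pendantBase], .refl⟩
  · exact ⟨pendant i 0, pendant_mem_pendantTip.2 (by omega), .single ⟨_,
      pendantBase_mem_edgeSet hi, pendant_mem_pendantBase.2 (by omega), by simp [pendantBase]⟩⟩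

lemma verts_sdiff_closedNbhd_leaders_subset (hq : 1 ≤ q) (hr : 2 ≤ r) :
    (hypergraph q r k).verts \ (hypergraph q r k).closedNbhd (leaders q) ⊆ tips r k := by
  intro v hv
  obtain ⟨hv, hvN⟩ := mem_sdiff.1 hv
  obtain ⟨e, he, hve⟩ := mem_verts.1 hv
  by_contra hvT
  refine hvN ?_
  have hmem : ∀ e ∈ edgeSet q r k, ∀ j < q, block j 0 ∈ e → v ∈ e →
      v ∈ (hypergraph q r k).closedNbhd (leaders q) := fun e he j hj hje hve =>
    mem_closedNbhd_of_mem_edge he hve hje (by simp [leaders, hj])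
  rcases mem_edgeSet.1 he with ⟨j, hj, rfl⟩ | ⟨j, hj, rfl⟩ | ⟨i, hi, rfl⟩ | ⟨i, hi, rfl⟩
  · exact hmem _ he j hj (block_mem_blockEdge.2 (by omega)) hve
  · exact hmem _ he j (by omega) (by simp [connectorEdge]) hve
  · exact hmem _ he 0 hq (by simp [pendantBase]) hve
  · obtain ⟨t, ht, rfl⟩ : ∃ t < r, pendant i t = v := by simpa [pendantTip] using hve
    have ht' : t < r - 1 := by
      by_contra h
      exact hvT (mem_image.2 ⟨i, mem_range.2 hi, by congr; omega⟩)
    exact hmem _ (pendantBase_mem_edgeSet hi) 0 hq (by simp [pendantBase])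
      (pendant_mem_pendantBase.2 ht')

lemma eq_blockEdge_of_mem {e : Finset ChainVertex} {j t : ℕ} (he : e ∈ edgeSet q r k)
    (hv : block j t ∈ e) (ht : t ≠ 0) : e = blockEdge r j := by
  rcases mem_edgeSet.1 he with ⟨j', -, rfl⟩ | ⟨j', -, rfl⟩ | ⟨i, -, rfl⟩ | ⟨i, -, rfl⟩ <;>
    simp_all [blockEdge, connectorEdge, pendantBase, pendantTip]

lemma eq_pendantTip_of_mem {e : Finset ChainVertex} {i : ℕ} (he : e ∈ edgeSet q r k)
    (hv : pendant i (r - 1) ∈ e) : e = pendantTip r i := by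
  rcases mem_edgeSet.1 he with ⟨j', -, rfl⟩ | ⟨j', -, rfl⟩ | ⟨i', -, rfl⟩ | ⟨i', -, rfl⟩ <;>
    simp_all [blockEdge, connectorEdge, pendantBase, pendantTip]

lemma isIsolating_leaders (hq : 1 ≤ q) (hk : 1 ≤ k) (hkr : k < r) :
    (hypergraph q r k).IsIsolating k r (leaders q) := by
  refine (isIsolating_iff_card_lt hkr).2
    ⟨image_subset_iff.2 fun j hj => block_mem_verts (t := 0) (mem_range.1 hj) (by omega), ?_⟩
  have := (card_le_card (verts_sdiff_closedNbhd_leaders_subset (r := r) (k := k) hq (by omega))).trans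
    (card_image_le.trans (card_range _).le)
  omega

lemma inter_blockEdge_nonempty_of_isIsolating (hkr : k < r) {D : Finset ChainVertex}
    (hD : (hypergraph q r k).IsIsolating k r D) {j : ℕ} (hj : j < q) :
    (D ∩ blockEdge r j).Nonempty := by
  refine inter_nonempty_of_isIsolating hkr hD (P := (Ico 1 r).image (block j)) ?_ ?_ ?_ ?_
  · simp only [image_subset_iff, mem_Ico]
    exact fun t ht => block_mem_verts hj ht.2
  · rw [card_image_of_injective _ fun _ _ h => by simpa using h, Nat.card_Ico]
    omega
  · simp only [image_subset_iff, mem_Ico, block_mem_blockEdge]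
    exact fun t ht => ht.2
  · simp only [mem_image, mem_Ico]
    rintro _ ⟨t, ht, rfl⟩ e he hv
    exact (eq_blockEdge_of_mem he hv (by omega)).subset

lemma iso_hypergraph (hq : 1 ≤ q) (hk : 1 ≤ k) (hkr : k < r) : (hypergraph q r k).iso k r = q := by
  have hleaders : (leaders q).card = q := by
    rw [leaders, card_image_of_injective _ fun _ _ h => by simpa using h, card_range]
  refine IsLeast.csInf_eq ⟨⟨leaders q, isIsolating_leaders hq hk hkr, hleaders⟩, ?_⟩
  rintro _ ⟨D, hD, rfl⟩
  simpa using card_le_card_of_forall_inter_nonempty (s := range q)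
    (fun _ _ _ _ h => by simp [blockEdge, disjoint_left, Ne.symm h])
    fun j hj => inter_blockEdge_nonempty_of_isIsolating hkr hD (mem_range.1 hj)

lemma isDominating_dominators (hq : 1 ≤ q) (hr : 2 ≤ r) :
    (hypergraph q r k).IsDominating (dominators q k) := by
  refine ⟨union_subset ?_ ?_, fun v hv => ?_⟩
  · exact image_subset_iff.2 fun j hj => block_mem_verts (t := 0) (mem_range.1 hj) (by omega)
  · exact image_subset_iff.2 fun i hi => pendant_mem_verts (t := 0) (mem_range.1 hi) (by omega)
  by_cases hvT : v ∈ tips r k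
  · obtain ⟨i, hi, rfl⟩ : ∃ i < k - 1, pendant i (r - 1) = v := by simpa [tips] using hvT
    exact mem_closedNbhd_of_mem_edge (u := pendant i 0) (pendantTip_mem_edgeSet hi)
      (pendant_mem_pendantTip.2 (by omega)) (pendant_mem_pendantTip.2 (by omega))
      (by simp [dominators, hi])
  · refine closedNbhd_mono subset_union_left (by_contra fun hvN => hvT ?_)
    exact verts_sdiff_closedNbhd_leaders_subset hq hr (mem_sdiff.2 ⟨hv, hvN⟩)

lemma card_dominators (q k : ℕ) : (dominators q k).card = q + (k - 1) := by
  rw [dominators, card_union_of_disjoint (by simp [leaders, disjoint_left]), leaders,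
    card_image_of_injective _ fun _ _ h => by simpa using h,
    card_image_of_injective _ fun _ _ h => by simpa using h, card_range, card_range]

lemma le_card_of_isDominating (hr : 2 ≤ r) {D : Finset ChainVertex}
    (hD : (hypergraph q r k).IsDominating D) : q + (k - 1) ≤ D.card := by
  have hdisj : ((range q).disjSum (range (k - 1)) : Set (ℕ ⊕ ℕ)).PairwiseDisjoint
      (Sum.elim (blockEdge r) (pendantTip r)) := by
    rintro (a | a) - (b | b) - hab <;>
      simp_all [Function.onFun, blockEdge, pendantTip, disjoint_left, eq_comm]
  suffices hmeet : ∀ x ∈ (range q).disjSum (range (k - 1)),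
      (D ∩ Sum.elim (blockEdge r) (pendantTip r) x).Nonempty by
    simpa using card_le_card_of_forall_inter_nonempty hdisj hmeet
  rintro (j | i) hx
  · have hj : j < q := by simpa using hx
    exact inter_nonempty_of_mem_closedNbhd (block_mem_blockEdge.2 (by omega : 1 < r))
      (fun e he hv => (eq_blockEdge_of_mem he hv one_ne_zero).subset)
      (hD.2 (block_mem_verts hj (by omega)))
  · have hi : i < k - 1 := by simpa using hx
    exact inter_nonempty_of_mem_closedNbhd (pendant_mem_pendantTip.2 (by omega : r - 1 < r))
      (fun e he hv => (eq_pendantTip_of_mem he hv).subset)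
      (hD.2 (pendant_mem_verts hi (by omega)))

lemma domNum_hypergraph (hq : 1 ≤ q) (hr : 2 ≤ r) : (hypergraph q r k).domNum = q + (k - 1) :=
  IsLeast.csInf_eq ⟨⟨dominators q k, isDominating_dominators hq hr, card_dominators q k⟩,
    fun _ ⟨_, hD, hn⟩ => hn ▸ le_card_of_isDominating hr hD⟩

end ChainWithPendants

/-- For every `q ≥ 1` and `1 ≤ k < r` there is a connected `r`-graph `I` with
`ι(I, K_k^r) = q` and `γ(I) = q + k − 1`; the bound `γ − k + 1 ≤ ι` is tight. -/
theorem stmt11 (q r k : ℕ) (hq : 1 ≤ q) (hk : 1 ≤ k) (hkr : k < r) :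
    ∃ I : FinHypergraph ℕ, I.Connected ∧ I.IsUniform r ∧
      I.iso k r = q ∧ I.domNum = q + k - 1 := by
  have hr : 2 ≤ r := by omega
  refine ⟨(ChainWithPendants.hypergraph q r k).map ChainVertex.embeddingNat,
    (ChainWithPendants.connected_hypergraph hr).map _,
    (ChainWithPendants.isUniform_hypergraph hr).map _, ?_, ?_⟩
  · rw [iso_map _ hkr, ChainWithPendants.iso_hypergraph hq hk hkr]
  · rw [domNum_map, ChainWithPendants.domNum_hypergraph hq hr]
    omega
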